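/- arXiv:2604.20402 — 5 statements merged into one kernel-verified Lean document; each statement's English description precedes it below -/
import Mathlib

section
/- Quenched statistical stability: under the hypotheses (1)–(5) of Theorem 1 — namely: uniform exponential decay ‖L^n_{ω,ε}h‖_w ≤ C e^{-λn}‖h‖_w for h with ψ(h)=0; the continuity estimate ‖L_{ω,ε}h − L_{ω'}h‖_w ≤ C(d(ω,ω')^ζ + |ε|^ζ)‖h‖_s for h ∈ B_s; normalization ψ(h_{ω,ε})=1 and uniform bound ‖h_{ω,ε}‖_s ≤ C; equivariance L_{ω,ε}h_{ω,ε} = h_{σ_εω,ε}; and σ⁻¹ Lipschitz with Lip(σ⁻¹) = e^c — there exists D > 0 such that for every α ∈ (0,1] with cαζ < λ and every ω ∈ Ω_ε ∩ Ω₀, ‖h_{ω,ε} − h_{ω,0}‖_w ≤ D(|ε|^ζ + dist_{C⁰}(σ⁻¹, σ_ε⁻¹)^{αζ}). -/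
/-- The random cocycle L^n_{ω,ε} = L_{σ_ε^{n-1}ω,ε} ∘ ⋯ ∘ L_{ω,ε} (and L⁰ = Id). -/
noncomputable def coc {Ω B : Type*} [NormedAddCommGroup B] [NormedSpace ℝ B]
    (σ : Ω → Ω) (L : Ω → B →L[ℝ] B) : ℕ → Ω → (B →L[ℝ] B)
  | 0, _ => ContinuousLinearMap.id ℝ B
  | n + 1, ω => (coc σ L n (σ ω)).comp (L ω)

private lemma interp_aux {d D₀ δ Y α ζ M : ℝ} (hd0 : 0 ≤ d) (hδ0 : 0 ≤ δ) (hY0 : 0 ≤ Y)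
    (hdD : d ≤ D₀) (hdY : d ≤ δ * Y)
    (hα : 0 < α) (hα1 : α ≤ 1) (hζ : 0 < ζ) (hζ1 : ζ ≤ 1)
    (hM1 : 1 ≤ M) (hDM : D₀ ≤ M) :
    d ^ ζ ≤ M * (δ ^ (α * ζ) * Y ^ (α * ζ)) := by
  have hD0 : 0 ≤ D₀ := hd0.trans hdD
  have hδY : 0 ≤ δ * Y := mul_nonneg hδ0 hY0
  have h1 : d ≤ D₀ ^ (1 - α) * (δ * Y) ^ α := by
    rcases eq_or_lt_of_le hd0 with hd | hd
    · rw [← hd]; positivity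
    · calc d = d ^ (1 - α) * d ^ α := by
            rw [← Real.rpow_add hd]; norm_num
        _ ≤ D₀ ^ (1 - α) * (δ * Y) ^ α :=
            mul_le_mul (Real.rpow_le_rpow hd0 hdD (by linarith))
              (Real.rpow_le_rpow hd0 hdY hα.le) (Real.rpow_nonneg hd0 _)
              (Real.rpow_nonneg hD0 _)
  have h2 : d ^ ζ ≤ (D₀ ^ (1 - α) * (δ * Y) ^ α) ^ ζ := Real.rpow_le_rpow hd0 h1 hζ.le
  have h3 : (D₀ ^ (1 - α) * (δ * Y) ^ α) ^ ζ
      = D₀ ^ ((1 - α) * ζ) * (δ ^ (α * ζ) * Y ^ (α * ζ)) := by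
    rw [Real.mul_rpow (Real.rpow_nonneg hD0 _) (Real.rpow_nonneg hδY _),
        ← Real.rpow_mul hD0, ← Real.rpow_mul hδY, Real.mul_rpow hδ0 hY0]
  have h4 : D₀ ^ ((1 - α) * ζ) ≤ M := by
    rcases le_or_gt D₀ 1 with hD1 | hD1
    · exact (Real.rpow_le_one hD0 hD1 (by nlinarith)).trans hM1
    · calc D₀ ^ ((1 - α) * ζ) ≤ D₀ ^ (1 : ℝ) :=
            Real.rpow_le_rpow_of_exponent_le hD1.le (by nlinarith)
        _ = D₀ := Real.rpow_one _
        _ ≤ M := hDM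
  rw [h3] at h2
  exact h2.trans (mul_le_mul_of_nonneg_right h4
    (mul_nonneg (Real.rpow_nonneg hδ0 _) (Real.rpow_nonneg hY0 _)))

set_option maxHeartbeats 1200000 in
/-- quenched statistical stability (Theorem 1). -/
theorem stmt5 {Ω Bw Bs : Type*} [MetricSpace Ω] [Nonempty Ω]
    [NormedAddCommGroup Bw] [NormedSpace ℝ Bw]
    [NormedAddCommGroup Bs] [NormedSpace ℝ Bs]
    (ι : Bs →L[ℝ] Bw) (hι : ∀ g : Bs, ‖ι g‖ ≤ ‖g‖)
    (ψ : Bw →L[ℝ] ℝ) (hψ : ψ ≠ 0)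
    (I : Set ℝ) (hI : (0 : ℝ) ∈ I)
    (σ : ℝ → Ω ≃ Ω) (Ωe : ℝ → Set Ω)
    (hinv : ∀ ε ∈ I, ∀ ω ∈ Ωe ε, (σ ε).symm ω ∈ Ωe ε ∧ (σ ε) ω ∈ Ωe ε)
    (L : ℝ → Ω → Bw →L[ℝ] Bw) (h : ℝ → Ω → Bs)
    (C lam ζ c D₀ : ℝ) (hC : 0 < C) (hlam : 0 < lam) (hζ : 0 < ζ) (hζ1 : ζ ≤ 1)
    (hc : 0 ≤ c)
    (hbdd : ∀ x y : Ω, dist x y ≤ D₀)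
    (hpres : ∀ ε ∈ I, ∀ (ω : Ω) (g : Bw), ψ (L ε ω g) = ψ g)
    (hdec : ∀ ε ∈ I, ∀ ω ∈ Ωe ε, ∀ (n : ℕ) (g : Bw), ψ g = 0 →
      ‖coc (⇑(σ ε)) (L ε) n ω g‖ ≤ C * Real.exp (-lam * n) * ‖g‖)
    (hcont : ∀ ε ∈ I, ∀ ω ∈ Ωe ε, ∀ ω' ∈ Ωe 0, ∀ g : Bs,
      ‖L ε ω (ι g) - L 0 ω' (ι g)‖ ≤ C * (dist ω ω' ^ ζ + |ε| ^ ζ) * ‖g‖)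
    (hnorm : ∀ ε ∈ I, ∀ ω ∈ Ωe ε, ψ (ι (h ε ω)) = 1 ∧ ‖h ε ω‖ ≤ C)
    (hequiv : ∀ ε ∈ I, ∀ ω ∈ Ωe ε, L ε ω (ι (h ε ω)) = ι (h ε ((σ ε) ω)))
    (hLip : ∀ x y : Ω, dist ((σ 0).symm x) ((σ 0).symm y) ≤ Real.exp c * dist x y)
    (α : ℝ) (hα : 0 < α) (hα1 : α ≤ 1) (hcαζ : c * α * ζ < lam) :
    ∃ D > 0, ∀ ε ∈ I, ∀ ω ∈ Ωe ε ∩ Ωe 0,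
      ‖ι (h ε ω) - ι (h 0 ω)‖ ≤
        D * (|ε| ^ ζ +
          (⨆ y : Ω, dist ((σ 0).symm y) ((σ ε).symm y)) ^ (α * ζ)) := by
  have hC3 : (0:ℝ) < C ^ 3 := by positivity
  set r1 : ℝ := Real.exp (-lam) with hr1
  have hr1pos : 0 < r1 := Real.exp_pos _
  have hr1lt : r1 < 1 := Real.exp_lt_one_iff.mpr (by linarith)
  set r : ℝ := Real.exp (-(lam - c * α * ζ)) with hrdef
  have hrpos : 0 < r := Real.exp_pos _
  have hrlt : r < 1 := Real.exp_lt_one_iff.mpr (by linarith)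
  have hsum1 : Summable fun k : ℕ => r1 ^ k := summable_geometric_of_lt_one hr1pos.le hr1lt
  have hsum2 : Summable fun k : ℕ => ((k : ℝ) + 1) * r ^ k := by
    have h1 : Summable fun k : ℕ => (k : ℝ) * r ^ k := by
      have := summable_pow_mul_geometric_of_norm_lt_one (R := ℝ) 1
        (r := r) (by rwa [Real.norm_eq_abs, abs_of_pos hrpos])
      simpa using this
    have h2 : Summable fun k : ℕ => r ^ k := summable_geometric_of_lt_one hrpos.le hrlt
    have := h1.add h2
    convert this using 2 with k
    ring
  set S1 : ℝ := ∑' k : ℕ, r1 ^ k with hS1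
  set S2 : ℝ := ∑' k : ℕ, ((k : ℝ) + 1) * r ^ k with hS2
  have hS1nn : 0 ≤ S1 := tsum_nonneg fun k => by positivity
  have hS2nn : 0 ≤ S2 := tsum_nonneg fun k => by positivity
  set M : ℝ := max 1 D₀ with hM
  have hM1 : (1:ℝ) ≤ M := le_max_left _ _
  set A : ℝ := C ^ 3 * M * Real.exp (c * α * ζ) * S2 with hA
  set B : ℝ := C ^ 3 * S1 with hB
  have hAnn : 0 ≤ A := by positivity
  have hBnn : 0 ≤ B := by positivity
  refine ⟨max A B + 1, by linarith [le_max_left A B], ?_⟩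
  intro ε hε ω hω
  obtain ⟨hωε, hω0⟩ := hω
  set δ : ℝ := ⨆ y : Ω, dist ((σ 0).symm y) ((σ ε).symm y) with hδ
  have hδ0 : 0 ≤ δ := Real.iSup_nonneg fun y => dist_nonneg
  have hbA : BddAbove (Set.range fun y : Ω => dist ((σ 0).symm y) ((σ ε).symm y)) :=
    ⟨D₀, by rintro x ⟨z, rfl⟩; exact hbdd ((σ 0).symm z) ((σ ε).symm z)⟩
  have hδle : ∀ y, dist ((σ 0).symm y) ((σ ε).symm y) ≤ δ := fun y => le_ciSup hbA y
  set p : ℕ → Ω := fun k => ((σ ε).symm)^[k] ω with hpdef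
  set q : ℕ → Ω := fun k => ((σ 0).symm)^[k] ω with hqdef
  have hp0 : p 0 = ω := rfl
  have hq0 : q 0 = ω := rfl
  have hps : ∀ k, p (k+1) = (σ ε).symm (p k) := fun k => Function.iterate_succ_apply' _ _ _
  have hqs : ∀ k, q (k+1) = (σ 0).symm (q k) := fun k => Function.iterate_succ_apply' _ _ _
  have hp : ∀ k, p k ∈ Ωe ε := by
    intro k; induction k with
    | zero => exact hωε
    | succ k ih => rw [hps]; exact (hinv ε hε _ ih).1
  have hq : ∀ k, q k ∈ Ωe 0 := by
    intro k; induction k with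
    | zero => exact hω0
    | succ k ih => rw [hqs]; exact (hinv 0 hI _ ih).1
  have hσp : ∀ k, σ ε (p (k+1)) = p k := fun k => by rw [hps]; exact (σ ε).apply_symm_apply _
  have hσq : ∀ k, σ 0 (q (k+1)) = q k := fun k => by rw [hqs]; exact (σ 0).apply_symm_apply _
  -- distance growth estimate
  have hdist : ∀ k : ℕ, dist (p k) (q k) ≤ δ * ((k : ℝ) * Real.exp (c * k)) := by
    intro k; induction k with
    | zero => simp [hp0, hq0]
    | succ k ih =>
      have h1 : dist (p (k+1)) (q (k+1)) ≤
          dist ((σ ε).symm (p k)) ((σ 0).symm (p k))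
          + dist ((σ 0).symm (p k)) ((σ 0).symm (q k)) := by
        rw [hps, hqs]; exact dist_triangle _ _ _
      have h2 : dist ((σ ε).symm (p k)) ((σ 0).symm (p k)) ≤ δ := by
        rw [dist_comm]; exact hδle _
      have h3 : dist ((σ 0).symm (p k)) ((σ 0).symm (q k)) ≤ Real.exp c * dist (p k) (q k) :=
        hLip _ _
      have hek1 : 1 ≤ Real.exp (c * ((k:ℝ)+1)) := Real.one_le_exp (by positivity)
      have hee : Real.exp c * Real.exp (c * (k:ℝ)) = Real.exp (c * ((k:ℝ)+1)) := by
        rw [← Real.exp_add]; ring_nf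
      have hecp : (0:ℝ) < Real.exp c := Real.exp_pos c
      have hd0 : (0:ℝ) ≤ dist (p k) (q k) := dist_nonneg
      have hcast : ((k+1 : ℕ) : ℝ) = (k:ℝ) + 1 := by push_cast; ring
      rw [hcast]
      have h4 : Real.exp c * dist (p k) (q k) ≤ Real.exp c * (δ * ((k:ℝ) * Real.exp (c * k))) :=
        mul_le_mul_of_nonneg_left ih hecp.le
      have h5 : Real.exp c * (δ * ((k:ℝ) * Real.exp (c * k)))
          = δ * ((k:ℝ) * Real.exp (c * ((k:ℝ)+1))) := by rw [← hee]; ring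
      have h6 : δ + δ * ((k:ℝ) * Real.exp (c * ((k:ℝ)+1)))
          ≤ δ * (((k:ℝ)+1) * Real.exp (c * ((k:ℝ)+1))) := by nlinarith
      calc dist (p (k+1)) (q (k+1))
          ≤ δ + Real.exp c * dist (p k) (q k) := by linarith
        _ ≤ δ + δ * ((k:ℝ) * Real.exp (c * ((k:ℝ)+1))) := by rw [← h5]; linarith
        _ ≤ δ * (((k:ℝ)+1) * Real.exp (c * ((k:ℝ)+1))) := h6
  -- key pointwise estimate
  have hkey : ∀ k : ℕ, Real.exp (-lam * k) * dist (p (k+1)) (q (k+1)) ^ ζ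
      ≤ M * δ ^ (α * ζ) * (((k:ℝ) + 1) * Real.exp (c * α * ζ) * r ^ k) := by
    intro k
    have hd0 : (0:ℝ) ≤ dist (p (k+1)) (q (k+1)) := dist_nonneg
    have hdD : dist (p (k+1)) (q (k+1)) ≤ D₀ := hbdd _ _
    set Y : ℝ := ((k:ℝ) + 1) * Real.exp (c * ((k:ℝ) + 1)) with hY
    have hY0 : (0:ℝ) ≤ Y := by positivity
    have hdY : dist (p (k+1)) (q (k+1)) ≤ δ * Y := by
      have := hdist (k+1)
      have hcast : ((k+1 : ℕ) : ℝ) = (k:ℝ) + 1 := by push_cast; ring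
      rw [hcast] at this
      exact this
    have hinterp := interp_aux hd0 hδ0 hY0 hdD hdY hα hα1 hζ hζ1 hM1 (le_max_right 1 D₀)
    have hYb : Y ^ (α * ζ) ≤ ((k:ℝ) + 1) * Real.exp (c * α * ζ) * Real.exp (c * α * ζ * k) := by
      have hk1 : (1:ℝ) ≤ (k:ℝ) + 1 := by
        have : (0:ℝ) ≤ (k:ℝ) := Nat.cast_nonneg k; linarith
      have he0 : (0:ℝ) ≤ Real.exp (c * ((k:ℝ)+1)) := (Real.exp_pos _).le
      rw [hY, Real.mul_rpow (by positivity) he0]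
      have h1 : ((k:ℝ) + 1) ^ (α * ζ) ≤ (k:ℝ) + 1 := by
        calc ((k:ℝ) + 1) ^ (α * ζ) ≤ ((k:ℝ) + 1) ^ (1:ℝ) :=
              Real.rpow_le_rpow_of_exponent_le hk1 (by nlinarith)
          _ = (k:ℝ) + 1 := Real.rpow_one _
      have h2 : Real.exp (c * ((k:ℝ)+1)) ^ (α * ζ)
          = Real.exp (c * α * ζ) * Real.exp (c * α * ζ * k) := by
        rw [← Real.exp_mul, ← Real.exp_add]; ring_nf
      rw [h2]
      have h3 : (0:ℝ) ≤ Real.exp (c * α * ζ) * Real.exp (c * α * ζ * k) := by positivity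
      calc ((k:ℝ) + 1) ^ (α * ζ) * (Real.exp (c * α * ζ) * Real.exp (c * α * ζ * k))
          ≤ ((k:ℝ) + 1) * (Real.exp (c * α * ζ) * Real.exp (c * α * ζ * k)) :=
            mul_le_mul_of_nonneg_right h1 h3
        _ = ((k:ℝ) + 1) * Real.exp (c * α * ζ) * Real.exp (c * α * ζ * k) := by ring
    have hδp : (0:ℝ) ≤ δ ^ (α * ζ) := Real.rpow_nonneg hδ0 _
    have hMδ : (0:ℝ) ≤ M * δ ^ (α * ζ) := by positivity
    have hstep1 : Real.exp (-lam * k) * dist (p (k+1)) (q (k+1)) ^ ζ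
        ≤ Real.exp (-lam * k) * (M * (δ ^ (α * ζ) * Y ^ (α * ζ))) :=
      mul_le_mul_of_nonneg_left hinterp (Real.exp_pos _).le
    have hstep2 : Real.exp (-lam * k) * (M * (δ ^ (α * ζ) * Y ^ (α * ζ)))
        ≤ Real.exp (-lam * k) * (M * (δ ^ (α * ζ) *
            (((k:ℝ) + 1) * Real.exp (c * α * ζ) * Real.exp (c * α * ζ * k)))) := by
      apply mul_le_mul_of_nonneg_left _ (Real.exp_pos _).le
      apply mul_le_mul_of_nonneg_left _ (by linarith : (0:ℝ) ≤ M)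
      exact mul_le_mul_of_nonneg_left hYb hδp
    have hexp : Real.exp (-lam * k) * Real.exp (c * α * ζ * k) = r ^ k := by
      rw [hrdef, ← Real.exp_nat_mul, ← Real.exp_add]; ring_nf
    calc Real.exp (-lam * k) * dist (p (k+1)) (q (k+1)) ^ ζ
        ≤ Real.exp (-lam * k) * (M * (δ ^ (α * ζ) *
            (((k:ℝ) + 1) * Real.exp (c * α * ζ) * Real.exp (c * α * ζ * k)))) :=
          hstep1.trans hstep2
      _ = M * δ ^ (α * ζ) * (((k:ℝ) + 1) * Real.exp (c * α * ζ) *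
            (Real.exp (-lam * k) * Real.exp (c * α * ζ * k))) := by ring
      _ = M * δ ^ (α * ζ) * (((k:ℝ) + 1) * Real.exp (c * α * ζ) * r ^ k) := by rw [hexp]
  -- partial sums bound
  have hbsum : ∀ n : ℕ, ∑ k ∈ Finset.range n,
      C * Real.exp (-lam * k) * (C * (dist (p (k+1)) (q (k+1)) ^ ζ + |ε| ^ ζ) * C)
      ≤ A * δ ^ (α * ζ) + B * |ε| ^ ζ := by
    intro n
    have hεp : (0:ℝ) ≤ |ε| ^ ζ := Real.rpow_nonneg (abs_nonneg ε) _
    have hδp : (0:ℝ) ≤ δ ^ (α * ζ) := Real.rpow_nonneg hδ0 _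
    have hpt : ∀ k ∈ Finset.range n,
        C * Real.exp (-lam * k) * (C * (dist (p (k+1)) (q (k+1)) ^ ζ + |ε| ^ ζ) * C)
        ≤ (C ^ 3 * M * Real.exp (c * α * ζ) * δ ^ (α * ζ)) * (((k:ℝ) + 1) * r ^ k)
          + (C ^ 3 * |ε| ^ ζ) * r1 ^ k := by
      intro k _
      have he1 : Real.exp (-lam * k) = r1 ^ k := by
        rw [hr1, ← Real.exp_nat_mul]; ring_nf
      have h1 : C ^ 3 * (Real.exp (-lam * k) * dist (p (k+1)) (q (k+1)) ^ ζ)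
          ≤ C ^ 3 * (M * δ ^ (α * ζ) * (((k:ℝ) + 1) * Real.exp (c * α * ζ) * r ^ k)) :=
        mul_le_mul_of_nonneg_left (hkey k) hC3.le
      have heq : C * Real.exp (-lam * k) * (C * (dist (p (k+1)) (q (k+1)) ^ ζ + |ε| ^ ζ) * C)
          = C ^ 3 * (Real.exp (-lam * k) * dist (p (k+1)) (q (k+1)) ^ ζ)
            + C ^ 3 * |ε| ^ ζ * Real.exp (-lam * k) := by ring
      have heq2 : C ^ 3 * (M * δ ^ (α * ζ) * (((k:ℝ) + 1) * Real.exp (c * α * ζ) * r ^ k))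
          = (C ^ 3 * M * Real.exp (c * α * ζ) * δ ^ (α * ζ)) * (((k:ℝ) + 1) * r ^ k) := by
        ring
      rw [heq, ← heq2, he1]
      rw [he1] at h1
      linarith
    calc ∑ k ∈ Finset.range n,
        C * Real.exp (-lam * k) * (C * (dist (p (k+1)) (q (k+1)) ^ ζ + |ε| ^ ζ) * C)
        ≤ ∑ k ∈ Finset.range n,
          ((C ^ 3 * M * Real.exp (c * α * ζ) * δ ^ (α * ζ)) * (((k:ℝ) + 1) * r ^ k)
            + (C ^ 3 * |ε| ^ ζ) * r1 ^ k) := Finset.sum_le_sum hpt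
      _ = (C ^ 3 * M * Real.exp (c * α * ζ) * δ ^ (α * ζ)) *
            (∑ k ∈ Finset.range n, ((k:ℝ) + 1) * r ^ k)
          + (C ^ 3 * |ε| ^ ζ) * (∑ k ∈ Finset.range n, r1 ^ k) := by
          rw [Finset.sum_add_distrib, ← Finset.mul_sum, ← Finset.mul_sum]
      _ ≤ (C ^ 3 * M * Real.exp (c * α * ζ) * δ ^ (α * ζ)) * S2
          + (C ^ 3 * |ε| ^ ζ) * S1 := by
          apply add_le_add
          · exact mul_le_mul_of_nonneg_left
              (Summable.sum_le_tsum _ (fun k _ => by positivity) hsum2) (by positivity)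
          · exact mul_le_mul_of_nonneg_left
              (Summable.sum_le_tsum _ (fun k _ => by positivity) hsum1) (by positivity)
      _ = A * δ ^ (α * ζ) + B * |ε| ^ ζ := by rw [hA, hB]; ring
  -- the sequence v
  set v : ℕ → Bw := fun k => coc (⇑(σ 0)) (L 0) k (q k) (ι (h ε (p k))) with hv
  have hcocsucc : ∀ (k : ℕ) (x : Ω) (g : Bw),
      coc (⇑(σ 0)) (L 0) (k+1) x g = coc (⇑(σ 0)) (L 0) k ((σ 0) x) (L 0 x g) :=
    fun k x g => by simp [coc]
  have hstep : ∀ k : ℕ, ‖v (k+1) - v k‖ ≤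
      C * Real.exp (-lam * k) * (C * (dist (p (k+1)) (q (k+1)) ^ ζ + |ε| ^ ζ) * C) := by
    intro k
    set u : Bw := ι (h ε (p (k+1))) with hu
    set g : Bw := L 0 (q (k+1)) u - L ε (p (k+1)) u with hg
    have harg : ι (h ε (p k)) = L ε (p (k+1)) u := by
      rw [hu, hequiv ε hε _ (hp (k+1)), hσp k]
    have hvk : v k = coc (⇑(σ 0)) (L 0) k (q k) (L ε (p (k+1)) u) := by
      show coc (⇑(σ 0)) (L 0) k (q k) (ι (h ε (p k))) = _
      rw [harg]
    have hvk1 : v (k+1) = coc (⇑(σ 0)) (L 0) k (q k) (L 0 (q (k+1)) u) := by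
      show coc (⇑(σ 0)) (L 0) (k+1) (q (k+1)) u = _
      rw [hcocsucc, hσq]
    have hdiff : v (k+1) - v k = coc (⇑(σ 0)) (L 0) k (q k) g := by
      rw [hvk, hvk1, hg, map_sub]
    have hψg : ψ g = 0 := by
      rw [hg, map_sub, hpres 0 hI, hpres ε hε, sub_self]
    have hng : ‖g‖ ≤ C * (dist (p (k+1)) (q (k+1)) ^ ζ + |ε| ^ ζ) * C := by
      have h1 : ‖g‖ = ‖L ε (p (k+1)) u - L 0 (q (k+1)) u‖ := norm_sub_rev _ _
      have h2 := hcont ε hε _ (hp (k+1)) _ (hq (k+1)) (h ε (p (k+1)))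
      have h3 := (hnorm ε hε _ (hp (k+1))).2
      have h4 : (0:ℝ) ≤ C * (dist (p (k+1)) (q (k+1)) ^ ζ + |ε| ^ ζ) := by
        have : (0:ℝ) ≤ dist (p (k+1)) (q (k+1)) ^ ζ := Real.rpow_nonneg dist_nonneg _
        have : (0:ℝ) ≤ |ε| ^ ζ := Real.rpow_nonneg (abs_nonneg ε) _
        positivity
      rw [h1, hu]
      exact h2.trans (mul_le_mul_of_nonneg_left h3 h4)
    rw [hdiff]
    have h5 := hdec 0 hI _ (hq k) k g hψg
    have h6 : (0:ℝ) ≤ C * Real.exp (-lam * k) := by positivity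
    exact h5.trans (mul_le_mul_of_nonneg_left hng h6)
  -- the tail
  have hco : ∀ n : ℕ, coc (⇑(σ 0)) (L 0) n (q n) (ι (h 0 (q n))) = ι (h 0 ω) := by
    intro n; induction n with
    | zero => rw [hq0]; simp [coc]
    | succ n ih =>
      rw [hcocsucc, hequiv 0 hI _ (hq (n+1)), hσq n]
      exact ih
  have htail : ∀ n : ℕ, ‖v n - ι (h 0 ω)‖ ≤ C * Real.exp (-lam * n) * (C + C) := by
    intro n
    have hdiff : v n - ι (h 0 ω)
        = coc (⇑(σ 0)) (L 0) n (q n) (ι (h ε (p n)) - ι (h 0 (q n))) := by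
      rw [map_sub, hco n]
    have hψ0 : ψ (ι (h ε (p n)) - ι (h 0 (q n))) = 0 := by
      rw [map_sub, (hnorm ε hε _ (hp n)).1, (hnorm 0 hI _ (hq n)).1, sub_self]
    have hn : ‖ι (h ε (p n)) - ι (h 0 (q n))‖ ≤ C + C :=
      (norm_sub_le _ _).trans (add_le_add
        ((hι _).trans (hnorm ε hε _ (hp n)).2)
        ((hι _).trans (hnorm 0 hI _ (hq n)).2))
    rw [hdiff]
    exact (hdec 0 hI _ (hq n) n _ hψ0).trans
      (mul_le_mul_of_nonneg_left hn (by positivity))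
  -- main inequality for each n
  have hmain : ∀ n : ℕ, ‖ι (h ε ω) - ι (h 0 ω)‖
      ≤ (A * δ ^ (α * ζ) + B * |ε| ^ ζ) + C * Real.exp (-lam * n) * (C + C) := by
    intro n
    have hv0 : v 0 = ι (h ε ω) := by
      show coc (⇑(σ 0)) (L 0) 0 (q 0) (ι (h ε (p 0))) = _
      rw [hp0]; simp [coc]
    have h1 : ‖ι (h ε ω) - ι (h 0 ω)‖ ≤ ‖v 0 - v n‖ + ‖v n - ι (h 0 ω)‖ := by
      rw [← hv0]
      have := dist_triangle (v 0) (v n) (ι (h 0 ω))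
      simpa [dist_eq_norm] using this
    have h2 : ‖v 0 - v n‖ ≤ ∑ k ∈ Finset.range n,
        C * Real.exp (-lam * k) * (C * (dist (p (k+1)) (q (k+1)) ^ ζ + |ε| ^ ζ) * C) := by
      have hd := dist_le_range_sum_dist v n
      rw [dist_eq_norm] at hd
      refine hd.trans (Finset.sum_le_sum fun k _ => ?_)
      rw [dist_eq_norm, norm_sub_rev]
      exact hstep k
    linarith [hbsum n, htail n]
  -- take the limit n → ∞
  have htend : Filter.Tendsto
      (fun n : ℕ => (A * δ ^ (α * ζ) + B * |ε| ^ ζ) + C * Real.exp (-lam * n) * (C + C))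
      Filter.atTop (nhds ((A * δ ^ (α * ζ) + B * |ε| ^ ζ) + 0)) := by
    apply Filter.Tendsto.const_add
    have h0 : Filter.Tendsto (fun n : ℕ => r1 ^ n) Filter.atTop (nhds 0) :=
      tendsto_pow_atTop_nhds_zero_of_lt_one hr1pos.le hr1lt
    have heqf : (fun n : ℕ => C * Real.exp (-lam * n) * (C + C))
        = fun n : ℕ => C * r1 ^ n * (C + C) := by
      funext n
      rw [hr1, ← Real.exp_nat_mul]
      ring_nf
    rw [heqf]
    have := (h0.const_mul C).mul_const (C + C)
    simpa using this
  have hfin : ‖ι (h ε ω) - ι (h 0 ω)‖ ≤ A * δ ^ (α * ζ) + B * |ε| ^ ζ := by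
    have := ge_of_tendsto' htend hmain
    simpa using this
  have hδp : (0:ℝ) ≤ δ ^ (α * ζ) := Real.rpow_nonneg hδ0 _
  have hεp : (0:ℝ) ≤ |ε| ^ ζ := Real.rpow_nonneg (abs_nonneg ε) _
  have hAle : A ≤ max A B + 1 := by linarith [le_max_left A B]
  have hBle : B ≤ max A B + 1 := by linarith [le_max_right A B]
  calc ‖ι (h ε ω) - ι (h 0 ω)‖ ≤ A * δ ^ (α * ζ) + B * |ε| ^ ζ := hfin
    _ ≤ (max A B + 1) * (|ε| ^ ζ + δ ^ (α * ζ)) := by nlinarith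
end

section
/- Series representation of the difference of equivariant families: under the hypotheses of Theorem 1, for every ω ∈ Ω_ε ∩ Ω₀ the series Σ_{j=0}^∞ L^j_{σ_ε^{-j}ω,ε}( (L_{σ_ε^{-(j+1)}ω,ε} − L_{σ^{-(j+1)}ω}) h_{σ^{-(j+1)}ω} ) converges in B_w and equals h_{ω,ε} − h_{ω,0}. -/
open Filter Topology Set

theorem hasSum_sub_of_telescoping {G : Type*} [AddCommGroup G] [TopologicalSpace G]
    [IsTopologicalAddGroup G] [T2Space G] {f g : ℕ → G} {l : G}
    (hf : ∀ n, f n = g (n + 1) - g n) (hs : Summable f) (hg : Tendsto g atTop (𝓝 l)) :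
    HasSum f (l - g 0) := by
  rw [hs.hasSum_iff_tendsto_nat]
  simpa only [hf, Finset.sum_range_sub] using hg.sub_const (g 0)

theorem summable_apply_of_ker {B E : Type*} [NormedAddCommGroup B] [NormedSpace ℝ B]
    [NormedAddCommGroup E] [NormedSpace ℝ E] [CompleteSpace E]
    (ψ : B →L[ℝ] ℝ) (A : ℕ → B →L[ℝ] E) {C lam K : ℝ} (hC : 0 ≤ C) (hlam : 0 < lam)
    (hA : ∀ n g, ψ g = 0 → ‖A n g‖ ≤ C * Real.exp (-lam * n) * ‖g‖)
    {u : ℕ → B} (hu : ∀ n, ψ (u n) = 0) (hK : ∀ n, ‖u n‖ ≤ K) :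
    Summable fun n => A n (u n) := by
  have hexp : Summable fun n : ℕ => Real.exp (-lam * n) := by
    simpa only [mul_comm] using Real.summable_exp_nat_mul_iff.mpr (neg_lt_zero.mpr hlam)
  refine Summable.of_norm_bounded (hexp.mul_left (C * K)) fun n => ?_
  calc ‖A n (u n)‖ ≤ C * Real.exp (-lam * n) * ‖u n‖ := hA n (u n) (hu n)
    _ ≤ C * Real.exp (-lam * n) * K := by gcongr; exact hK n
    _ = C * K * Real.exp (-lam * n) := by ring

section Cocycle

variable {Ω B : Type*} [NormedAddCommGroup B] [NormedSpace ℝ B]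

theorem coc_apply_of_equivariant (σ : Ω → Ω) (L : Ω → B →L[ℝ] B) {S : Set Ω}
    (hS : MapsTo σ S S) {v : Ω → B} (hv : ∀ ω ∈ S, L ω (v ω) = v (σ ω)) (n : ℕ) :
    ∀ ω ∈ S, coc σ L n ω (v ω) = v (σ^[n] ω) := by
  induction n with
  | zero => exact fun ω _ => rfl
  | succ n ih =>
    intro ω hω
    rw [Function.iterate_succ_apply, ← ih (σ ω) (hS hω), ← hv ω hω]
    rfl

theorem coc_succ_symm_iterate (σ : Ω ≃ Ω) (L : Ω → B →L[ℝ] B) (n : ℕ) (ω : Ω) :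
    coc σ L (n + 1) (σ.symm^[n + 1] ω) =
      (coc σ L n (σ.symm^[n] ω)).comp (L (σ.symm^[n + 1] ω)) := by
  change (coc σ L n (σ _)).comp _ = _
  rw [Function.iterate_succ_apply', σ.apply_symm_apply]

theorem coc_symm_iterate_sub_apply (σ : Ω ≃ Ω) (L : Ω → B →L[ℝ] B) {M : B →L[ℝ] B} {x y : B}
    (hM : M x = y) (n : ℕ) (ω : Ω) :
    coc σ L n (σ.symm^[n] ω) ((L (σ.symm^[n + 1] ω) - M) x) =
      coc σ L (n + 1) (σ.symm^[n + 1] ω) x - coc σ L n (σ.symm^[n] ω) y := by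
  rw [coc_succ_symm_iterate, sub_apply, map_sub, hM, ContinuousLinearMap.comp_apply]

end Cocycle

theorem stmt6_general {Ω Bw Bs : Type*} [MetricSpace Ω]
    [NormedAddCommGroup Bw] [NormedSpace ℝ Bw] [CompleteSpace Bw]
    [NormedAddCommGroup Bs] [NormedSpace ℝ Bs]
    (ι : Bs →L[ℝ] Bw) (hι : ∀ g : Bs, ‖ι g‖ ≤ ‖g‖)
    (ψ : Bw →L[ℝ] ℝ)
    (I : Set ℝ) (hI : (0 : ℝ) ∈ I)
    (σ : ℝ → Ω ≃ Ω) (Ωe : ℝ → Set Ω)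
    (hinv : ∀ ε ∈ I, ∀ ω ∈ Ωe ε, (σ ε).symm ω ∈ Ωe ε ∧ (σ ε) ω ∈ Ωe ε)
    (L : ℝ → Ω → Bw →L[ℝ] Bw) (h : ℝ → Ω → Bs)
    (C lam ζ D₀ : ℝ) (hC : 0 < C) (hlam : 0 < lam) (hζ : 0 < ζ)
    (hbdd : ∀ x y : Ω, dist x y ≤ D₀)
    (hpres : ∀ ε ∈ I, ∀ (ω : Ω) (g : Bw), ψ (L ε ω g) = ψ g)
    (hdec : ∀ ε ∈ I, ∀ ω ∈ Ωe ε, ∀ (n : ℕ) (g : Bw), ψ g = 0 →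
      ‖coc (⇑(σ ε)) (L ε) n ω g‖ ≤ C * Real.exp (-lam * n) * ‖g‖)
    (hcont : ∀ ε ∈ I, ∀ ω ∈ Ωe ε, ∀ ω' ∈ Ωe 0, ∀ g : Bs,
      ‖L ε ω (ι g) - L 0 ω' (ι g)‖ ≤ C * (dist ω ω' ^ ζ + |ε| ^ ζ) * ‖g‖)
    (hnorm : ∀ ε ∈ I, ∀ ω ∈ Ωe ε, ψ (ι (h ε ω)) = 1 ∧ ‖h ε ω‖ ≤ C)
    (hequiv : ∀ ε ∈ I, ∀ ω ∈ Ωe ε, L ε ω (ι (h ε ω)) = ι (h ε ((σ ε) ω))) :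
    ∀ ε ∈ I, ∀ ω ∈ Ωe ε ∩ Ωe 0,
      HasSum (fun j : ℕ =>
        coc (⇑(σ ε)) (L ε) j ((σ ε).symm^[j] ω)
          ((L ε ((σ ε).symm^[j + 1] ω) - L 0 ((σ 0).symm^[j + 1] ω))
            (ι (h 0 ((σ 0).symm^[j + 1] ω)))))
        (ι (h ε ω) - ι (h 0 ω)) := by
  intro ε hε ω ⟨hωε, hω0⟩
  have horbit : ∀ δ ∈ I, ∀ ω ∈ Ωe δ, ∀ n, (σ δ).symm^[n] ω ∈ Ωe δ := fun δ hδ ω hω n =>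
    MapsTo.iterate (fun x hx => (hinv δ hδ x hx).1) n hω
  have hbound : ∀ δ ∈ I, ∀ x ∈ Ωe δ, ‖ι (h δ x)‖ ≤ C := fun δ hδ x hx =>
    (hι _).trans (hnorm δ hδ x hx).2
  set A := fun n => coc (⇑(σ ε)) (L ε) n ((σ ε).symm^[n] ω)
  have hA := fun n => hdec ε hε _ (horbit ε hε ω hωε n) n
  have hfixε : ∀ n, A n (ι (h ε ((σ ε).symm^[n] ω))) = ι (h ε ω) := fun n => by
    rw [coc_apply_of_equivariant _ _ (fun x hx => (hinv ε hε x hx).2) (hequiv ε hε) n _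
      (horbit ε hε ω hωε n), (σ ε).rightInverse_symm.iterate n ω]
  refine hasSum_sub_of_telescoping (g := fun n => A n (ι (h 0 ((σ 0).symm^[n] ω))))
    (fun n => coc_symm_iterate_sub_apply _ _ ?_ n ω) ?_ ?_
  · rw [hequiv 0 hI _ (horbit 0 hI ω hω0 _), Function.iterate_succ_apply', Equiv.apply_symm_apply]
  · refine summable_apply_of_ker ψ A hC.le hlam hA (K := C * (D₀ ^ ζ + |ε| ^ ζ) * C)
      (fun n => by rw [sub_apply, map_sub, hpres ε hε, hpres 0 hI, sub_self])
      (fun n => (hcont ε hε _ (horbit ε hε ω hωε _) _ (horbit 0 hI ω hω0 _) _).trans ?_)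
    have hD₀ : 0 ≤ D₀ := dist_nonneg.trans (hbdd ω ω)
    gcongr
    · exact hbdd _ _
    · exact (hnorm 0 hI _ (horbit 0 hI ω hω0 _)).2
  · have hker := summable_apply_of_ker ψ A hC.le hlam hA (K := C + C)
      (u := fun n => ι (h 0 ((σ 0).symm^[n] ω)) - ι (h ε ((σ ε).symm^[n] ω)))
      (fun n => by rw [map_sub, (hnorm 0 hI _ (horbit 0 hI ω hω0 n)).1,
        (hnorm ε hε _ (horbit ε hε ω hωε n)).1, sub_self])
      (fun n => (norm_sub_le _ _).trans (add_le_add (hbound 0 hI _ (horbit 0 hI ω hω0 n))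
        (hbound ε hε _ (horbit ε hε ω hωε n))))
    simpa only [map_sub, hfixε, sub_add_cancel, zero_add] using
      hker.tendsto_atTop_zero.add_const (ι (h ε ω))

/-- series representation of the difference of equivariant families:
under the hypotheses of Theorem 1, the series
Σ_j L^j_{σ_ε^{-j}ω,ε}((L_{σ_ε^{-(j+1)}ω,ε} − L_{σ^{-(j+1)}ω}) h_{σ^{-(j+1)}ω})
converges in B_w to h_{ω,ε} − h_{ω,0}. -/
theorem stmt6 {Ω Bw Bs : Type*} [MetricSpace Ω] [Nonempty Ω]
    [NormedAddCommGroup Bw] [NormedSpace ℝ Bw] [CompleteSpace Bw]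
    [NormedAddCommGroup Bs] [NormedSpace ℝ Bs]
    (ι : Bs →L[ℝ] Bw) (hι : ∀ g : Bs, ‖ι g‖ ≤ ‖g‖)
    (ψ : Bw →L[ℝ] ℝ) (hψ : ψ ≠ 0)
    (I : Set ℝ) (hI : (0 : ℝ) ∈ I)
    (σ : ℝ → Ω ≃ Ω) (Ωe : ℝ → Set Ω)
    (hinv : ∀ ε ∈ I, ∀ ω ∈ Ωe ε, (σ ε).symm ω ∈ Ωe ε ∧ (σ ε) ω ∈ Ωe ε)
    (L : ℝ → Ω → Bw →L[ℝ] Bw) (h : ℝ → Ω → Bs)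
    (C lam ζ c D₀ : ℝ) (hC : 0 < C) (hlam : 0 < lam) (hζ : 0 < ζ) (hζ1 : ζ ≤ 1)
    (hc : 0 ≤ c)
    (hbdd : ∀ x y : Ω, dist x y ≤ D₀)
    (hpres : ∀ ε ∈ I, ∀ (ω : Ω) (g : Bw), ψ (L ε ω g) = ψ g)
    (hdec : ∀ ε ∈ I, ∀ ω ∈ Ωe ε, ∀ (n : ℕ) (g : Bw), ψ g = 0 →
      ‖coc (⇑(σ ε)) (L ε) n ω g‖ ≤ C * Real.exp (-lam * n) * ‖g‖)
    (hcont : ∀ ε ∈ I, ∀ ω ∈ Ωe ε, ∀ ω' ∈ Ωe 0, ∀ g : Bs,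
      ‖L ε ω (ι g) - L 0 ω' (ι g)‖ ≤ C * (dist ω ω' ^ ζ + |ε| ^ ζ) * ‖g‖)
    (hnorm : ∀ ε ∈ I, ∀ ω ∈ Ωe ε, ψ (ι (h ε ω)) = 1 ∧ ‖h ε ω‖ ≤ C)
    (hequiv : ∀ ε ∈ I, ∀ ω ∈ Ωe ε, L ε ω (ι (h ε ω)) = ι (h ε ((σ ε) ω)))
    (hLip : ∀ x y : Ω, dist ((σ 0).symm x) ((σ 0).symm y) ≤ Real.exp c * dist x y) :
    ∀ ε ∈ I, ∀ ω ∈ Ωe ε ∩ Ωe 0,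
      HasSum (fun j : ℕ =>
        coc (⇑(σ ε)) (L ε) j ((σ ε).symm^[j] ω)
          ((L ε ((σ ε).symm^[j + 1] ω) - L 0 ((σ 0).symm^[j + 1] ω))
            (ι (h 0 ((σ 0).symm^[j + 1] ω)))))
        (ι (h ε ω) - ι (h 0 ω)) :=
  stmt6_general ι hι ψ I hI σ Ωe hinv L h C lam ζ D₀ hC hlam hζ hbdd hpres hdec hcont hnorm hequiv
end

section
/- Perturbation bound for random cocycles: assume ‖L^n_{ω,ε}h‖_w ≤ Ce^{-λn}‖h‖_w for h ∈ ker ψ, ‖L_{ω,ε}h − L_{ω'}h‖_w ≤ C(d(ω,ω')^ζ + |ε|^ζ)‖h‖_s for h ∈ B_s, sup_j ‖L^j_ω‖_s ≤ K, d(σ_ε^{-i}ω, σ^{-i}ω) ≤ C' e^{ci}|ε| for all i, and bounded families Λ_{ω,j} with uniformly bounded operator norm and range in ker ψ ∩ B_s. If additionally c < λ, then there is a constant C'' such that for all j, ε, ω, ‖(L^j_{σ_ε^{-j}ω,ε} − L^j_{σ^{-j}ω}) Λ_{ω,j} h_{σ^{-(j+1)}ω}‖_w ≤ C'' |ε|^ζ,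 with C'' independent of j, ε, ω. -/
lemma coc_psi {Ω B : Type*} [NormedAddCommGroup B] [NormedSpace ℝ B]
    (σ : Ω → Ω) (L : Ω → B →L[ℝ] B) (ψ : B →L[ℝ] ℝ)
    (h : ∀ (ω : Ω) (g : B), ψ (L ω g) = ψ g) :
    ∀ (n : ℕ) (ω : Ω) (g : B), ψ (coc σ L n ω g) = ψ g := by
  intro n
  induction n with
  | zero => intro ω g; simp [coc]
  | succ n ih => intro ω g; simp only [coc, ContinuousLinearMap.comp_apply, ih, h]

lemma coc_compat {Ω Bw Bs : Type*}
    [NormedAddCommGroup Bw] [NormedSpace ℝ Bw]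
    [NormedAddCommGroup Bs] [NormedSpace ℝ Bs]
    (σ : Ω → Ω) (ιw : Bs →L[ℝ] Bw) (Lw : Ω → Bw →L[ℝ] Bw) (Ls : Ω → Bs →L[ℝ] Bs)
    (h : ∀ (ω : Ω) (g : Bs), ιw (Ls ω g) = Lw ω (ιw g)) :
    ∀ (n : ℕ) (ω : Ω) (g : Bs), ιw (coc σ Ls n ω g) = coc σ Lw n ω (ιw g) := by
  intro n
  induction n with
  | zero => intro ω g; simp [coc]
  | succ n ih => intro ω g; simp only [coc, ContinuousLinearMap.comp_apply, h, ih]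

lemma coc_succ_apply {Ω B : Type*} [NormedAddCommGroup B] [NormedSpace ℝ B]
    (σ : Ω → Ω) (L : Ω → B →L[ℝ] B) (n : ℕ) (x : Ω) (v : B) :
    coc σ L (n+1) x v = coc σ L n (σ x) (L x v) := rfl

lemma coc_telescope {Ω B : Type*} [NormedAddCommGroup B] [NormedSpace ℝ B]
    (σ1 σ2 e1 e2 : Ω → Ω) (h1 : ∀ x, σ1 (e1 x) = x) (h2 : ∀ x, σ2 (e2 x) = x)
    (L1 L2 : Ω → B →L[ℝ] B) (ω : Ω) :
    ∀ (j : ℕ) (v : B),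
      coc σ1 L1 j (e1^[j] ω) v - coc σ2 L2 j (e2^[j] ω) v
        = ∑ k ∈ Finset.range j, coc σ1 L1 k (e1^[k] ω)
            ((L1 (e1^[k+1] ω) - L2 (e2^[k+1] ω)) (coc σ2 L2 (j-1-k) (e2^[j] ω) v)) := by
  intro j
  induction j with
  | zero => intro v; simp [coc]
  | succ j ih =>
    intro v
    have he1 : σ1 (e1^[j+1] ω) = e1^[j] ω := by
      rw [Function.iterate_succ_apply']; exact h1 _
    have he2 : σ2 (e2^[j+1] ω) = e2^[j] ω := by
      rw [Function.iterate_succ_apply']; exact h2 _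
    have hL : coc σ1 L1 (j+1) (e1^[j+1] ω) v
        = coc σ1 L1 j (e1^[j] ω) (L1 (e1^[j+1] ω) v) := by
      rw [coc_succ_apply, he1]
    have hR : coc σ2 L2 (j+1) (e2^[j+1] ω) v
        = coc σ2 L2 j (e2^[j] ω) (L2 (e2^[j+1] ω) v) := by
      rw [coc_succ_apply, he2]
    have key : coc σ1 L1 (j+1) (e1^[j+1] ω) v - coc σ2 L2 (j+1) (e2^[j+1] ω) v
        = (coc σ1 L1 j (e1^[j] ω) (L2 (e2^[j+1] ω) v)
            - coc σ2 L2 j (e2^[j] ω) (L2 (e2^[j+1] ω) v))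
          + coc σ1 L1 j (e1^[j] ω) ((L1 (e1^[j+1] ω) - L2 (e2^[j+1] ω)) v) := by
      rw [hL, hR]
      simp only [ContinuousLinearMap.sub_apply, map_sub]
      abel
    rw [key, ih (L2 (e2^[j+1] ω) v), Finset.sum_range_succ]
    congr 1
    · apply Finset.sum_congr rfl
      intro k hk
      rw [Finset.mem_range] at hk
      congr 2
      have hjk : j - k = (j - 1 - k) + 1 := by omega
      have hm : coc σ2 L2 (j-k) (e2^[j+1] ω) v
          = coc σ2 L2 (j-1-k) (e2^[j] ω) (L2 (e2^[j+1] ω) v) := by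
        rw [hjk, coc_succ_apply, he2]
      rw [show j + 1 - 1 - k = j - k from by omega, ← hm]
    · have h0 : j + 1 - 1 - j = 0 := by omega
      rw [h0]
      rfl

lemma geom_sum_le_aux (r : ℝ) (h0 : 0 ≤ r) (h1 : r < 1) (n : ℕ) :
    ∑ k ∈ Finset.range n, r ^ k ≤ 1 / (1 - r) := by
  have hpos : 0 < 1 - r := by linarith
  rw [le_div_iff₀ hpos]
  have := geom_sum_mul r n
  have h2 : (∑ i ∈ Finset.range n, r ^ i) * (1 - r) = 1 - r ^ n := by
    have := geom_sum_mul r n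
    nlinarith [this]
  rw [h2]
  have : 0 ≤ r ^ n := pow_nonneg h0 n
  linarith

/-- perturbation bound for random cocycles:
‖(L^j_{σ_ε^{-j}ω,ε} − L^j_{σ^{-j}ω}) Λ_{ω,j} h_{σ^{-(j+1)}ω}‖_w ≤ C''|ε|^ζ
uniformly in j, ε, ω. -/
theorem stmt9 {Ω Bw Bs Bss : Type*} [MetricSpace Ω]
    [NormedAddCommGroup Bw] [NormedSpace ℝ Bw]
    [NormedAddCommGroup Bs] [NormedSpace ℝ Bs]
    [NormedAddCommGroup Bss] [NormedSpace ℝ Bss]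
    (ιs : Bss →L[ℝ] Bs) (ιw : Bs →L[ℝ] Bw)
    (hιs : ∀ g : Bss, ‖ιs g‖ ≤ ‖g‖) (hιw : ∀ g : Bs, ‖ιw g‖ ≤ ‖g‖)
    (ψ : Bw →L[ℝ] ℝ)
    (I : Set ℝ) (hI : (0 : ℝ) ∈ I)
    (σ : ℝ → Ω ≃ Ω)
    (Lw : ℝ → Ω → Bw →L[ℝ] Bw) (Ls : Ω → Bs →L[ℝ] Bs)
    (hcompat : ∀ (ω : Ω) (g : Bs), ιw (Ls ω g) = Lw 0 ω (ιw g))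
    (C C' K lam c ζ Mb : ℝ) (hC : 0 < C) (hC' : 0 < C') (hK : 0 < K)
    (hlam : 0 < lam) (hclam : c < lam) (hc : 0 ≤ c) (hζ : 0 < ζ) (hζ1 : ζ ≤ 1)
    (hpres : ∀ ε ∈ I, ∀ (ω : Ω) (g : Bw), ψ (Lw ε ω g) = ψ g)
    (hdec : ∀ ε ∈ I, ∀ (ω : Ω) (n : ℕ) (g : Bw), ψ g = 0 →
      ‖coc (⇑(σ ε)) (Lw ε) n ω g‖ ≤ C * Real.exp (-lam * n) * ‖g‖)
    (hcont : ∀ ε ∈ I, ∀ (ω ω' : Ω) (g : Bs),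
      ‖Lw ε ω (ιw g) - Lw 0 ω' (ιw g)‖ ≤ C * (dist ω ω' ^ ζ + |ε| ^ ζ) * ‖g‖)
    (hLs : ∀ (ω : Ω) (j : ℕ), ‖coc (⇑(σ 0)) Ls j ω‖ ≤ K)
    (hdist : ∀ ε ∈ I, ∀ (ω : Ω) (i : ℕ),
      dist ((σ ε).symm^[i] ω) ((σ 0).symm^[i] ω) ≤ C' * Real.exp (c * i) * |ε|)
    (Λ : Ω → ℕ → Bss →L[ℝ] Bs)
    (hΛ : ∀ (ω : Ω) (j : ℕ), ‖Λ ω j‖ ≤ Mb)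
    (hΛker : ∀ (ω : Ω) (j : ℕ) (g : Bss), ψ (ιw (Λ ω j g)) = 0)
    (h0 : Ω → Bss) (hh0 : ∀ ω : Ω, ‖h0 ω‖ ≤ C) :
    ∃ C'' > 0, ∀ ε ∈ I, ∀ (ω : Ω) (j : ℕ),
      ‖(coc (⇑(σ ε)) (Lw ε) j ((σ ε).symm^[j] ω) -
          coc (⇑(σ 0)) (Lw 0) j ((σ 0).symm^[j] ω))
        (ιw (Λ ω j (h0 ((σ 0).symm^[j + 1] ω))))‖ ≤ C'' * |ε| ^ ζ := by
  -- constants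
  set M : ℝ := max Mb 0 with hM
  have hM0 : 0 ≤ M := le_max_right _ _
  set r1 : ℝ := Real.exp (c * ζ - lam) with hr1def
  set r2 : ℝ := Real.exp (-lam) with hr2def
  have hr1pos : 0 < r1 := Real.exp_pos _
  have hr2pos : 0 < r2 := Real.exp_pos _
  have hczeta : c * ζ ≤ c := by
    calc c * ζ ≤ c * 1 := by nlinarith
    _ = c := mul_one c
  have hr1 : r1 < 1 := by
    rw [hr1def, Real.exp_lt_one_iff]; linarith
  have hr2 : r2 < 1 := by
    rw [hr2def, Real.exp_lt_one_iff]; linarith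
  set S : ℝ := C' ^ ζ * Real.exp (c * ζ) * (1 / (1 - r1)) + 1 / (1 - r2) with hSdef
  have hS0 : 0 ≤ S := by
    have h1 : (0:ℝ) ≤ C' ^ ζ := Real.rpow_nonneg hC'.le ζ
    have hr1' : (0:ℝ) < 1 - r1 := by linarith
    have hr2' : (0:ℝ) < 1 - r2 := by linarith
    have h2 : (0:ℝ) ≤ 1 / (1 - r1) := by positivity
    have h3 : (0:ℝ) ≤ 1 / (1 - r2) := by positivity
    have := Real.exp_pos (c * ζ)
    positivity
  set P : ℝ := C * C * K * (M * C) with hPdef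
  have hP0 : 0 ≤ P := by positivity
  refine ⟨P * S + 1, by positivity, ?_⟩
  intro ε hε ω j
  have habs : (0:ℝ) ≤ |ε| := abs_nonneg ε
  have hεζ : (0:ℝ) ≤ |ε| ^ ζ := Real.rpow_nonneg habs ζ
  set g : Bs := Λ ω j (h0 ((σ 0).symm^[j + 1] ω)) with hgdef
  have hg : ‖g‖ ≤ M * C := by
    calc ‖g‖ ≤ ‖Λ ω j‖ * ‖h0 ((σ 0).symm^[j + 1] ω)‖ := (Λ ω j).le_opNorm _
    _ ≤ M * C := mul_le_mul ((hΛ ω j).trans (le_max_left _ _)) (hh0 _) (norm_nonneg _) hM0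
  -- the function b
  set b : ℕ → ℝ := fun k => Real.exp (-lam * k) * (C' ^ ζ * Real.exp (c * ζ * (k + 1)) + 1)
    with hbdef
  -- per term bound
  rw [ContinuousLinearMap.sub_apply,
    coc_telescope (⇑(σ ε)) (⇑(σ 0)) (⇑(σ ε).symm) (⇑(σ 0).symm)
      (σ ε).apply_symm_apply (σ 0).apply_symm_apply (Lw ε) (Lw 0) ω j (ιw g)]
  refine le_trans (norm_sum_le _ _) ?_
  have hterm : ∀ k ∈ Finset.range j,
      ‖coc (⇑(σ ε)) (Lw ε) k ((⇑(σ ε).symm)^[k] ω)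
        ((Lw ε ((⇑(σ ε).symm)^[k+1] ω) - Lw 0 ((⇑(σ 0).symm)^[k+1] ω))
          (coc (⇑(σ 0)) (Lw 0) (j-1-k) ((⇑(σ 0).symm)^[j] ω) (ιw g)))‖
        ≤ P * |ε| ^ ζ * b k := by
    intro k _
    set u : Bs := coc (⇑(σ 0)) Ls (j-1-k) ((⇑(σ 0).symm)^[j] ω) g with hudef
    have hwk : coc (⇑(σ 0)) (Lw 0) (j-1-k) ((⇑(σ 0).symm)^[j] ω) (ιw g) = ιw u :=
      (coc_compat (⇑(σ 0)) ιw (Lw 0) Ls hcompat (j-1-k) _ g).symm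
    have hu : ‖u‖ ≤ K * (M * C) := by
      calc ‖u‖ ≤ ‖coc (⇑(σ 0)) Ls (j-1-k) ((⇑(σ 0).symm)^[j] ω)‖ * ‖g‖ :=
            ContinuousLinearMap.le_opNorm _ _
      _ ≤ K * (M * C) := mul_le_mul (hLs _ _) hg (norm_nonneg _) hK.le
    rw [hwk]
    set d : Bw := (Lw ε ((⇑(σ ε).symm)^[k+1] ω) - Lw 0 ((⇑(σ 0).symm)^[k+1] ω)) (ιw u)
      with hddef
    have hψd : ψ d = 0 := by
      rw [hddef, ContinuousLinearMap.sub_apply, map_sub,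
        hpres ε hε _ (ιw u), hpres 0 hI _ (ιw u), sub_self]
    have hA : ‖coc (⇑(σ ε)) (Lw ε) k ((⇑(σ ε).symm)^[k] ω) d‖
        ≤ C * Real.exp (-lam * k) * ‖d‖ := hdec ε hε _ k d hψd
    -- distance estimate
    have hdistk : dist ((⇑(σ ε).symm)^[k+1] ω) ((⇑(σ 0).symm)^[k+1] ω) ^ ζ
        ≤ C' ^ ζ * Real.exp (c * ζ * (k + 1)) * |ε| ^ ζ := by
      have h1 : dist ((⇑(σ ε).symm)^[k+1] ω) ((⇑(σ 0).symm)^[k+1] ω) ^ ζ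
          ≤ (C' * Real.exp (c * (k+1 : ℕ)) * |ε|) ^ ζ :=
        Real.rpow_le_rpow dist_nonneg (hdist ε hε ω (k+1)) hζ.le
      refine h1.trans_eq ?_
      rw [Real.mul_rpow (by positivity) habs, Real.mul_rpow hC'.le (Real.exp_pos _).le,
        ← Real.exp_mul]
      push_cast
      ring_nf
    have hB : ‖d‖ ≤ C * ((C' ^ ζ * Real.exp (c * ζ * (k + 1)) + 1) * |ε| ^ ζ) * (K * (M * C)) := by
      have h1 : ‖d‖ ≤ C * (dist ((⇑(σ ε).symm)^[k+1] ω) ((⇑(σ 0).symm)^[k+1] ω) ^ ζ + |ε| ^ ζ)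
          * ‖u‖ := by
        rw [hddef, ContinuousLinearMap.sub_apply]
        exact hcont ε hε _ _ u
      refine h1.trans ?_
      have h2 : dist ((⇑(σ ε).symm)^[k+1] ω) ((⇑(σ 0).symm)^[k+1] ω) ^ ζ + |ε| ^ ζ
          ≤ (C' ^ ζ * Real.exp (c * ζ * (k + 1)) + 1) * |ε| ^ ζ := by
        rw [add_mul, one_mul]
        exact add_le_add hdistk le_rfl
      have hd0 : (0:ℝ) ≤ dist ((⇑(σ ε).symm)^[k+1] ω) ((⇑(σ 0).symm)^[k+1] ω) ^ ζ + |ε| ^ ζ :=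
        add_nonneg (Real.rpow_nonneg dist_nonneg ζ) hεζ
      exact mul_le_mul (mul_le_mul_of_nonneg_left h2 hC.le) hu (norm_nonneg _)
        (by positivity)
    calc ‖coc (⇑(σ ε)) (Lw ε) k ((⇑(σ ε).symm)^[k] ω) d‖
        ≤ C * Real.exp (-lam * k) * ‖d‖ := hA
      _ ≤ C * Real.exp (-lam * k)
          * (C * ((C' ^ ζ * Real.exp (c * ζ * (k + 1)) + 1) * |ε| ^ ζ) * (K * (M * C))) :=
          mul_le_mul_of_nonneg_left hB (by positivity)
      _ = P * |ε| ^ ζ * b k := by rw [hPdef, hbdef]; ring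
  refine le_trans (Finset.sum_le_sum hterm) ?_
  -- sum of b
  have hbsum : ∑ k ∈ Finset.range j, b k ≤ S := by
    have hbk : ∀ k : ℕ, b k = C' ^ ζ * Real.exp (c * ζ) * r1 ^ k + r2 ^ k := by
      intro k
      have e1 : r1 ^ k = Real.exp ((c * ζ - lam) * k) := by
        rw [← Real.exp_nat_mul]; ring_nf
      have e2 : r2 ^ k = Real.exp ((-lam) * k) := by
        rw [← Real.exp_nat_mul]; ring_nf
      have key : Real.exp (-lam * (k:ℝ)) * Real.exp (c * ζ * ((k:ℝ) + 1))
          = Real.exp (c * ζ) * r1 ^ k := by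
        rw [e1, ← Real.exp_add, ← Real.exp_add]; ring_nf
      calc b k = C' ^ ζ * (Real.exp (-lam * (k:ℝ)) * Real.exp (c * ζ * ((k:ℝ) + 1)))
            + Real.exp (-lam * (k:ℝ)) := by rw [hbdef]; ring
        _ = C' ^ ζ * Real.exp (c * ζ) * r1 ^ k + r2 ^ k := by rw [key, ← e2]; ring
    rw [Finset.sum_congr rfl (fun k _ => hbk k), Finset.sum_add_distrib, ← Finset.mul_sum]
    refine add_le_add ?_ (geom_sum_le_aux r2 hr2pos.le hr2 j)
    exact mul_le_mul_of_nonneg_left (geom_sum_le_aux r1 hr1pos.le hr1 j)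
      (by positivity)
  calc ∑ k ∈ Finset.range j, P * |ε| ^ ζ * b k = P * |ε| ^ ζ * ∑ k ∈ Finset.range j, b k := by
        rw [Finset.mul_sum]
    _ ≤ P * |ε| ^ ζ * S := mul_le_mul_of_nonneg_left hbsum (by positivity)
    _ = P * S * |ε| ^ ζ := by ring
    _ ≤ (P * S + 1) * |ε| ^ ζ := by nlinarith
end

section
/- Annealed statistical stability (abstract form): in the setting of Theorem 2, suppose ‖h_{ω,ε} − h_ω‖_w ≤ D(|ε|^ζ + dist_{C⁰}(σ⁻¹,σ_ε⁻¹)^{αζ}) for ω in a common full-measure set Ω', that |h(φ)| ≤ C‖h‖_w‖φ‖_{C^r} for h ∈ B_w, that ‖P_ε − P₀‖_𝔉 → 0 and dist_{C⁰}(σ⁻¹,σ_ε⁻¹) → 0 as ε → 0, that R := sup_ε sup_{‖f‖_𝔉 ≤ 1} |∫ f dP_ε| < ∞, and that Φ : Ω×M → ℝ is such that ω ↦ h_ω(Φ(ω,·)) and ω ↦ ‖Φ(ω,·)‖_{C^r} belong to 𝔉. Then ∫ Φ dμ_ε → ∫ Φ dμ₀ as ε → 0, where μ_ε(A×B) = ∫_A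 h_{ω,ε}(B) dP_ε(ω). -/
open MeasureTheory Filter Topology

/-!
The two sources of perturbation are separated by adding and subtracting `∫ h_ω(Φ(ω,·)) dP_ε`.
The first difference is controlled fibrewise by the quenched estimate and the continuity of the
pairing, leaving `‖h_{ω,ε} - h_ω‖_w ∫ ‖Φ(ω,·)‖ dP_ε`, where the integral is bounded uniformly in
`ε` by `R`; the second is at most `‖P_ε - P₀‖_𝔉 ‖h_ω(Φ(ω,·))‖_𝔉`.
-/

theorem norm_integral_apply_sub_integral_apply_le {Ω E F G : Type*} [MeasurableSpace Ω]
    {μ : Measure Ω} [NormedAddCommGroup E] [NormedSpace ℝ E] [NormedAddCommGroup F]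
    [NormedSpace ℝ F] [NormedAddCommGroup G] [NormedSpace ℝ G]
    (B : E →L[ℝ] F →L[ℝ] G) {u v : Ω → E} {Φ : Ω → F} {c : ℝ}
    (hu : Integrable (fun ω => B (u ω) (Φ ω)) μ) (hv : Integrable (fun ω => B (v ω) (Φ ω)) μ)
    (hΦ : Integrable (fun ω => ‖Φ ω‖) μ) (huv : ∀ᵐ ω ∂μ, ‖u ω - v ω‖ ≤ c) :
    ‖∫ ω, B (u ω) (Φ ω) ∂μ - ∫ ω, B (v ω) (Φ ω) ∂μ‖ ≤ ‖B‖ * c * ∫ ω, ‖Φ ω‖ ∂μ := by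
  rw [← integral_sub hu hv, ← integral_const_mul]
  refine (norm_integral_le_integral_norm _).trans
    (integral_mono_ae (hu.sub hv).norm (hΦ.const_mul _) ?_)
  filter_upwards [huv] with ω hω
  calc ‖B (u ω) (Φ ω) - B (v ω) (Φ ω)‖ = ‖B (u ω - v ω) (Φ ω)‖ := by
        rw [map_sub, sub_apply]
    _ ≤ ‖B‖ * ‖u ω - v ω‖ * ‖Φ ω‖ := B.le_opNorm₂ _ _
    _ ≤ ‖B‖ * c * ‖Φ ω‖ := by gcongr

theorem stmt12_general {Ω F Bw : Type*} [MeasurableSpace Ω]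
    [NormedAddCommGroup Bw] [NormedSpace ℝ Bw]
    [NormedAddCommGroup F] [NormedSpace ℝ F]
    (I : Set ℝ) (hI : (0 : ℝ) ∈ I)
    (P : ℝ → Measure Ω)
    -- the pairing: elements of B_w act as distributions of order r on observables
    (B : Bw →L[ℝ] F →L[ℝ] ℝ)
    (h : ℝ → Ω → Bw) (Ω' : Set Ω)
    (hΩ' : ∀ ε ∈ I, P ε Ω'ᶜ = 0)
    -- the seminorm of the space 𝔉 and the uniform bound R
    (N : (Ω → ℝ) → ℝ) (R : ℝ)
    (hR : ∀ ε ∈ I, ∀ f : Ω → ℝ, Integrable f (P ε) → |∫ ω, f ω ∂P ε| ≤ R * N f)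
    -- statistical stability of ε ↦ P_ε:  ‖P_ε − P₀‖_𝔉 ≤ η ε → 0
    (η : ℝ → ℝ)
    (hη : ∀ ε ∈ I, ∀ f : Ω → ℝ, Integrable f (P ε) → Integrable f (P 0) →
      |∫ ω, f ω ∂P ε - ∫ ω, f ω ∂P 0| ≤ η ε * N f)
    (hηlim : Tendsto η (𝓝[I] 0) (𝓝 0))
    -- dist_{C⁰}(σ⁻¹, σ_ε⁻¹) ≤ δC0 ε → 0
    (δC0 : ℝ → ℝ) (hδlim : Tendsto δC0 (𝓝[I] 0) (𝓝 0))
    -- quenched statistical stability (conclusion of Theorem 1)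
    (D α ζ : ℝ) (hα : 0 < α) (hζ : 0 < ζ)
    (hq : ∀ ε ∈ I, ∀ ω ∈ Ω', ‖h ε ω - h 0 ω‖ ≤ D * (|ε| ^ ζ + δC0 ε ^ (α * ζ)))
    -- the observable Φ, with θ = ‖Φ(ω,·)‖_{C^r} and φ = h_ω(Φ(ω,·)) in 𝔉
    (Φ : Ω → F)
    (hInt : ∀ ε ∈ I, Integrable (fun ω => ‖Φ ω‖) (P ε) ∧
      Integrable (fun ω => B (h ε ω) (Φ ω)) (P ε) ∧
      Integrable (fun ω => B (h 0 ω) (Φ ω)) (P ε)) :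
    Tendsto (fun ε => ∫ ω, B (h ε ω) (Φ ω) ∂P ε) (𝓝[I] 0)
      (𝓝 (∫ ω, B (h 0 ω) (Φ ω) ∂P 0)) := by
  have hrate : Tendsto (fun ε => D * (|ε| ^ ζ + δC0 ε ^ (α * ζ))) (𝓝[I] 0) (𝓝 0) := by
    have habs : Tendsto (fun ε : ℝ => |ε|) (𝓝[I] 0) (𝓝 0) :=
      (continuous_abs.tendsto' 0 0 abs_zero).mono_left nhdsWithin_le_nhds
    simpa using ((habs.rpow_const_nhds_zero hζ).add
      (hδlim.rpow_const_nhds_zero (mul_pos hα hζ))).const_mul D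
  have hmass : IsBoundedUnder (· ≤ ·) (𝓝[I] 0) ((‖·‖) ∘ fun ε => ∫ ω, ‖Φ ω‖ ∂P ε) := by
    refine isBoundedUnder_of_eventually_le (a := R * N fun ω => ‖Φ ω‖) ?_
    filter_upwards [self_mem_nhdsWithin] with ε hε
    exact (Real.norm_eq_abs _).trans_le (hR ε hε _ (hInt ε hε).1)
  have hquenched : Tendsto (fun ε => ∫ ω, B (h ε ω) (Φ ω) ∂P ε - ∫ ω, B (h 0 ω) (Φ ω) ∂P ε)
      (𝓝[I] 0) (𝓝 0) := by
    refine squeeze_zero_norm' ?_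
      ((mul_zero ‖B‖ ▸ hrate.const_mul ‖B‖).zero_mul_isBoundedUnder_le hmass)
    filter_upwards [self_mem_nhdsWithin] with ε hε
    obtain ⟨hΦ, hε_int, h0_int⟩ := hInt ε hε
    simpa [mul_assoc] using norm_integral_apply_sub_integral_apply_le B hε_int h0_int hΦ
      ((show ∀ᵐ ω ∂P ε, ω ∈ Ω' from mem_ae_iff.2 (hΩ' ε hε)).mono (hq ε hε))
  have hannealed : Tendsto (fun ε => ∫ ω, B (h 0 ω) (Φ ω) ∂P ε) (𝓝[I] 0)
      (𝓝 (∫ ω, B (h 0 ω) (Φ ω) ∂P 0)) := by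
    rw [tendsto_iff_norm_sub_tendsto_zero]
    refine squeeze_zero_norm' ?_
      (zero_mul (N _) ▸ hηlim.mul_const (N fun ω => B (h 0 ω) (Φ ω)))
    filter_upwards [self_mem_nhdsWithin] with ε hε
    simpa using hη ε hε _ (hInt ε hε).2.2 (hInt 0 hI).2.2
  simpa using hquenched.add hannealed

/-- annealed statistical stability (abstract form of Theorem 2):
∫ Φ dμ_ε → ∫ Φ dμ₀ as ε → 0 (within I), where
∫ Φ dμ_ε = ∫_Ω h_{ω,ε}(Φ(ω,·)) dP_ε(ω). -/
theorem stmt12 {Ω F Bw : Type*} [MeasurableSpace Ω]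
    [NormedAddCommGroup Bw] [NormedSpace ℝ Bw]
    [NormedAddCommGroup F] [NormedSpace ℝ F]
    (I : Set ℝ) (hI : (0 : ℝ) ∈ I)
    (P : ℝ → Measure Ω) (hP : ∀ ε ∈ I, IsProbabilityMeasure (P ε))
    -- the pairing: elements of B_w act as distributions of order r on observables
    (B : Bw →L[ℝ] F →L[ℝ] ℝ) (Cb : ℝ)
    (hB : ∀ (g : Bw) (φ : F), |B g φ| ≤ Cb * ‖g‖ * ‖φ‖)
    (h : ℝ → Ω → Bw) (Ω' : Set Ω)
    (hΩ' : ∀ ε ∈ I, P ε Ω'ᶜ = 0)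
    -- the seminorm of the space 𝔉 and the uniform bound R
    (N : (Ω → ℝ) → ℝ) (hNnn : ∀ f, 0 ≤ N f) (R : ℝ)
    (hR : ∀ ε ∈ I, ∀ f : Ω → ℝ, Integrable f (P ε) → |∫ ω, f ω ∂P ε| ≤ R * N f)
    -- statistical stability of ε ↦ P_ε:  ‖P_ε − P₀‖_𝔉 ≤ η ε → 0
    (η : ℝ → ℝ)
    (hη : ∀ ε ∈ I, ∀ f : Ω → ℝ, Integrable f (P ε) → Integrable f (P 0) →
      |∫ ω, f ω ∂P ε - ∫ ω, f ω ∂P 0| ≤ η ε * N f)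
    (hηlim : Tendsto η (𝓝[I] 0) (𝓝 0))
    -- dist_{C⁰}(σ⁻¹, σ_ε⁻¹) ≤ δC0 ε → 0
    (δC0 : ℝ → ℝ) (hδnn : ∀ ε, 0 ≤ δC0 ε) (hδlim : Tendsto δC0 (𝓝[I] 0) (𝓝 0))
    -- quenched statistical stability (conclusion of Theorem 1)
    (D α ζ : ℝ) (hD : 0 < D) (hα : 0 < α) (hα1 : α ≤ 1) (hζ : 0 < ζ) (hζ1 : ζ ≤ 1)
    (hq : ∀ ε ∈ I, ∀ ω ∈ Ω', ‖h ε ω - h 0 ω‖ ≤ D * (|ε| ^ ζ + δC0 ε ^ (α * ζ)))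
    -- the observable Φ, with θ = ‖Φ(ω,·)‖_{C^r} and φ = h_ω(Φ(ω,·)) in 𝔉
    (Φ : Ω → F)
    (hInt : ∀ ε ∈ I, Integrable (fun ω => ‖Φ ω‖) (P ε) ∧
      Integrable (fun ω => B (h ε ω) (Φ ω)) (P ε) ∧
      Integrable (fun ω => B (h 0 ω) (Φ ω)) (P ε)) :
    Tendsto (fun ε => ∫ ω, B (h ε ω) (Φ ω) ∂P ε) (𝓝[I] 0)
      (𝓝 (∫ ω, B (h 0 ω) (Φ ω) ∂P 0)) :=
  stmt12_general I hI P B h Ω' hΩ' N R hR η hη hηlim δC0 hδlim D α ζ hα hζ hq Φ hInt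
end

section
/- Annealed linear response decomposition: let P_ε be probability measures on Ω, and suppose: (i) ∫ g dP_ε = ∫ g dP₀ + ε P₀'(g) + o(ε) for every g in a class 𝔉; (ii) for ω in a full-measure set Ω', (h_{ω,ε} − h_ω)(Φ(ω,·)) = ε φ̃(ω) + o(ε) uniformly in ω, where φ̃(ω) = Γ_ω(Φ(ω,·)); (iii) the functions ω ↦ h_ω(Φ(ω,·)) and ω ↦ φ̃(ω) belong to 𝔉, and sup_ε ‖P_ε‖_𝔉 < ∞. Then lim_{ε→0} ε^{-1}( ∫ Φ dμ_ε − ∫ Φ dμ₀ ) = ∫ φ̃ dP₀ + P₀'(ω ↦ h_ω(Φ(ω,·))), where μ_ε(A×B) = ∫_A h_{ω,ε}(B) dP_ε(ω). -/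
open MeasureTheory Filter Topology Asymptotics

/-!
The limit is the derivative at `0`, within `I`, of `ε ↦ ∫ u ε dP_ε`, which splits as
`∫ u 0 dP_ε + ε ∫ φt dP_ε + ∫ (u ε - u 0 - ε φt) dP_ε`. The first term has derivative
`P' (u 0)` by (i); the second has derivative `∫ φt dP₀` because (i) makes `ε ↦ ∫ φt dP_ε`
continuous at `0`; the last is bounded by `r ε = o(ε)` by (ii).
-/

lemma hasDerivWithinAt_zero_iff_isLittleO {F : ℝ → ℝ} {c : ℝ} {s : Set ℝ} :
    HasDerivWithinAt F c s 0 ↔ (fun ε => F ε - F 0 - ε * c) =o[𝓝[s] 0] fun ε => ε := by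
  simp only [hasDerivWithinAt_iff_isLittleO, sub_zero, smul_eq_mul]

lemma ContinuousWithinAt.hasDerivWithinAt_id_mul {H : ℝ → ℝ} {s : Set ℝ}
    (hH : ContinuousWithinAt H s 0) : HasDerivWithinAt (fun ε => ε * H ε) (H 0) s 0 := by
  rw [hasDerivWithinAt_zero_iff_isLittleO]
  have hsmall : (fun ε => H ε - H 0) =o[𝓝[s] 0] fun _ => (1 : ℝ) :=
    isLittleO_one_iff ℝ |>.2 (tendsto_sub_nhds_zero_iff.2 hH)
  simpa [mul_sub] using (isBigO_refl (fun ε : ℝ => ε) _).mul_isLittleO hsmall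

lemma hasDerivWithinAt_zero_of_abs_le {E r : ℝ → ℝ} {s : Set ℝ} (hE0 : E 0 = 0)
    (hEr : ∀ ε ∈ s, |E ε| ≤ r ε) (hr : r =o[𝓝[s] 0] fun ε => ε) :
    HasDerivWithinAt E 0 s 0 := by
  rw [hasDerivWithinAt_zero_iff_isLittleO]
  refine (IsBigO.of_bound 1 ?_).trans_isLittleO hr
  filter_upwards [self_mem_nhdsWithin] with ε hε
  simpa [hE0] using (hEr ε hε).trans (le_abs_self _)

section Integral

variable {Ω : Type*} [MeasurableSpace Ω] {μ : Measure Ω}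

lemma abs_integral_le_of_ae_abs_le [IsProbabilityMeasure μ] {f : Ω → ℝ} {C : ℝ}
    (h : ∀ᵐ ω ∂μ, |f ω| ≤ C) : |∫ ω, f ω ∂μ| ≤ C := by
  simpa using norm_integral_le_of_norm_le_const (μ := μ) (f := f) (by simpa using h)

lemma integral_eq_add_mul_add_integral_sub_sub_mul {f g h : Ω → ℝ} (c : ℝ)
    (hf : Integrable f μ) (hg : Integrable g μ) (hh : Integrable h μ) :
    ∫ ω, f ω ∂μ = ∫ ω, g ω ∂μ + c * ∫ ω, h ω ∂μ + ∫ ω, (f ω - g ω - c * h ω) ∂μ := by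
  have hfg : Integrable (fun ω => f ω - g ω) μ := hf.sub hg
  rw [integral_sub hfg (hh.const_mul c), integral_sub hf hg, integral_const_mul]
  ring

end Integral

theorem stmt13_general {Ω : Type*} [MeasurableSpace Ω]
    (I : Set ℝ)
    (P : ℝ → Measure Ω) (hP : ∀ ε ∈ I, IsProbabilityMeasure (P ε))
    (𝔉 : Set (Ω → ℝ)) (P' : (Ω → ℝ) → ℝ)
    (u : ℝ → Ω → ℝ) (φt : Ω → ℝ) (Ω' : Set Ω)
    (hΩ' : ∀ ε ∈ I, P ε Ω'ᶜ = 0)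
    (hint : ∀ g ∈ 𝔉, ∀ ε ∈ I, Integrable g (P ε))
    -- (i): linear response for ε ↦ P_ε on the class 𝔉
    (hi : ∀ g ∈ 𝔉,
      (fun ε => ∫ ω, g ω ∂P ε - ∫ ω, g ω ∂P 0 - ε * P' g) =o[𝓝[I] 0] fun ε => ε)
    -- (ii): quenched linear response, uniformly in ω ∈ Ω'
    (r : ℝ → ℝ) (hr : r =o[𝓝[I] 0] fun ε => ε)
    (hii : ∀ ε ∈ I, ∀ ω ∈ Ω', |u ε ω - u 0 ω - ε * φt ω| ≤ r ε)
    -- (iii): membership in 𝔉 and uniform boundedness of the functionals P_ε on 𝔉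
    (hmem1 : φt ∈ 𝔉) (hmem2 : u 0 ∈ 𝔉)
    (hintu : ∀ ε ∈ I, Integrable (u ε) (P ε)) :
    Tendsto (fun ε => (∫ ω, u ε ω ∂P ε - ∫ ω, u 0 ω ∂P 0) / ε) (𝓝[I \ {0}] 0)
      (𝓝 (∫ ω, φt ω ∂P 0 + P' (u 0))) := by
  have hφt := hasDerivWithinAt_zero_iff_isLittleO.2 (hi φt hmem1)
  have hu₀ := hasDerivWithinAt_zero_iff_isLittleO.2 (hi (u 0) hmem2)
  have hrem : HasDerivWithinAt (fun ε => ∫ ω, (u ε ω - u 0 ω - ε * φt ω) ∂P ε) 0 I 0 := by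
    refine hasDerivWithinAt_zero_of_abs_le (by simp) (fun ε hε => ?_) hr
    have := hP ε hε
    refine abs_integral_le_of_ae_abs_le ?_
    filter_upwards [mem_ae_iff.2 (hΩ' ε hε)] with ω hω using hii ε hε ω hω
  have hsum := (hφt.continuousWithinAt.hasDerivWithinAt_id_mul.add hu₀).add hrem
  rw [add_zero] at hsum
  have hF : HasDerivWithinAt (fun ε => ∫ ω, u ε ω ∂P ε) (∫ ω, φt ω ∂P 0 + P' (u 0)) I 0 := by
    refine hsum.congr_of_eventuallyEq ?_ (by simp)
    filter_upwards [self_mem_nhdsWithin] with ε hε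
    simp only [Pi.add_apply]
    rw [integral_eq_add_mul_add_integral_sub_sub_mul ε (hintu ε hε) (hint _ hmem2 ε hε)
      (hint _ hmem1 ε hε)]
    ring
  refine (hasDerivWithinAt_iff_tendsto_slope.1 hF).congr fun ε => ?_
  rw [slope_def_field, sub_zero]

/-- annealed linear response decomposition ('chain rule' of Theorem 4):
lim_{ε→0} ε⁻¹(∫Φ dμ_ε − ∫Φ dμ₀) = ∫ φ̃ dP₀ + P₀'(ω ↦ h_ω(Φ(ω,·))), where
u ε ω = h_{ω,ε}(Φ(ω,·)) and φ̃ ω = Γ_ω(Φ(ω,·)). -/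
theorem stmt13 {Ω : Type*} [MeasurableSpace Ω]
    (I : Set ℝ) (hI : (0 : ℝ) ∈ I)
    (P : ℝ → Measure Ω) (hP : ∀ ε ∈ I, IsProbabilityMeasure (P ε))
    (𝔉 : Set (Ω → ℝ)) (N : (Ω → ℝ) → ℝ) (P' : (Ω → ℝ) → ℝ)
    (u : ℝ → Ω → ℝ) (φt : Ω → ℝ) (Ω' : Set Ω)
    (hΩ' : ∀ ε ∈ I, P ε Ω'ᶜ = 0)
    (hint : ∀ g ∈ 𝔉, ∀ ε ∈ I, Integrable g (P ε))
    -- (i): linear response for ε ↦ P_ε on the class 𝔉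
    (hi : ∀ g ∈ 𝔉,
      (fun ε => ∫ ω, g ω ∂P ε - ∫ ω, g ω ∂P 0 - ε * P' g) =o[𝓝[I] 0] fun ε => ε)
    -- (ii): quenched linear response, uniformly in ω ∈ Ω'
    (r : ℝ → ℝ) (hrnn : ∀ ε, 0 ≤ r ε) (hr : r =o[𝓝[I] 0] fun ε => ε)
    (hii : ∀ ε ∈ I, ∀ ω ∈ Ω', |u ε ω - u 0 ω - ε * φt ω| ≤ r ε)
    -- (iii): membership in 𝔉 and uniform boundedness of the functionals P_ε on 𝔉
    (hmem1 : φt ∈ 𝔉) (hmem2 : u 0 ∈ 𝔉)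
    (R : ℝ) (hR : ∀ ε ∈ I, ∀ g ∈ 𝔉, |∫ ω, g ω ∂P ε| ≤ R * N g)
    (hintu : ∀ ε ∈ I, Integrable (u ε) (P ε)) :
    Tendsto (fun ε => (∫ ω, u ε ω ∂P ε - ∫ ω, u 0 ω ∂P 0) / ε) (𝓝[I \ {0}] 0)
      (𝓝 (∫ ω, φt ω ∂P 0 + P' (u 0))) :=
  stmt13_general I P hP 𝔉 P' u φt Ω' hΩ' hint hi r hr hii hmem1 hmem2 hintu
end
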